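/- arXiv:2011.09402 — 10 statements merged into one kernel-verified Lean document; each statement's English description precedes it below -/
import Mathlib

section
/- If A = {A_1, ..., A_m} is a family of subsets of [n] such that |A_i| is odd for every i and |A_i ∩ A_j| is even for all i ≠ j, then m ≤ n. -/
/-!
Over `ZMod 2` the dot product of the indicator vectors of `s` and `t` is `#(s ∩ t)` mod 2, so
the indicator vectors of an oddtown family are orthonormal, hence linearly independent in
`ZMod 2 ^ n`; there are therefore at most `n` of them.
-/

open Finset Matrix

theorem dotProduct_indicator_one {α R : Type*} [Fintype α] [DecidableEq α] [NonAssocSemiring R]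
    (s t : Finset α) :
    (s : Set α).indicator (1 : α → R) ⬝ᵥ (t : Set α).indicator 1 = #(s ∩ t) := by
  simp [dotProduct, Set.indicator_apply, inter_comm]

theorem linearIndependent_of_dotProduct {ι α K : Type*} [Fintype α] [Field K] {v : ι → α → K}
    (hne : ∀ i j, i ≠ j → v i ⬝ᵥ v j = 0) (hself : ∀ i, v i ⬝ᵥ v i ≠ 0) :
    LinearIndependent K v :=
  LinearMap.BilinForm.linearIndependent_of_iIsOrtho (B := dotProductBilin K K)
    (LinearMap.BilinForm.iIsOrtho_def.2 hne) hself

theorem linearIndependent_indicator_zmod_two {ι α : Type*} [Fintype α] [DecidableEq α]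
    (A : ι → Finset α) (hodd : ∀ i, Odd #(A i)) (heven : ∀ i j, i ≠ j → Even #(A i ∩ A j)) :
    LinearIndependent (ZMod 2) fun i ↦ (A i : Set α).indicator (1 : α → ZMod 2) := by
  refine linearIndependent_of_dotProduct (fun i j hij ↦ ?_) (fun i ↦ ?_)
  · rw [dotProduct_indicator_one, ZMod.natCast_eq_zero_iff_even]
    exact heven i j hij
  · rw [dotProduct_indicator_one, inter_self, (ZMod.natCast_eq_one_iff_odd).2 (hodd i)]
    exact one_ne_zero

theorem card_le_of_odd_card_of_even_card_inter {ι α : Type*} [Fintype ι] [Fintype α]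
    [DecidableEq α] (A : ι → Finset α) (hodd : ∀ i, Odd #(A i))
    (heven : ∀ i j, i ≠ j → Even #(A i ∩ A j)) :
    Fintype.card ι ≤ Fintype.card α := by
  simpa using (linearIndependent_indicator_zmod_two A hodd heven).fintype_card_le_finrank

theorem oddtown_general (n m : ℕ) (A : Fin m → Finset (Fin n))
    (hodd : ∀ i, Odd (A i).card)
    (heven : ∀ i j, i ≠ j → Even ((A i ∩ A j).card)) :
    m ≤ n := by
  simpa using card_le_of_odd_card_of_even_card_inter A hodd heven

/-- Oddtown theorem (Berlekamp): a family of `m` distinct subsets of `[n]`,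
each of odd size, with pairwise even intersections, has `m ≤ n`. -/
theorem oddtown (n m : ℕ) (A : Fin m → Finset (Fin n))
    (hinj : Function.Injective A)
    (hodd : ∀ i, Odd (A i).card)
    (heven : ∀ i j, i ≠ j → Even ((A i ∩ A j).card)) :
    m ≤ n :=
  oddtown_general n m A hodd heven
end

section
/- Let A_1, ..., A_m and B_1, ..., B_m be subsets of [n] such that |A_i ∩ B_i| is odd for all i ∈ [m], and |A_i ∩ B_j| is even whenever i < j. Then m ≤ n. -/
/-!
Over `ZMod 2`, the matrix `(|A i ∩ B j| mod 2)ᵢⱼ` is the product of the `m × n` incidence matrix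
of the `A i` with the transposed incidence matrix of the `B j`. The parity hypotheses make it lower
triangular with ones on the diagonal, so it is invertible and has rank `m`; but a product through
an `n`-dimensional space has rank at most `n`.
-/

open Finset Matrix

theorem Matrix.card_le_of_mul_isLowerTriangular {R m n : Type*} [CommRing R] [Nontrivial R]
    [Fintype m] [LinearOrder m] [Fintype n] (P : Matrix m n R) (Q : Matrix n m R)
    (htri : (P * Q).IsLowerTriangular) (hdiag : ∀ i, IsUnit ((P * Q) i i)) :
    Fintype.card m ≤ Fintype.card n := by
  have hunit : IsUnit (P * Q) := by
    rw [isUnit_iff_isUnit_det, det_of_isLowerTriangular _ htri]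
    exact IsUnit.prod_univ_iff.mpr hdiag
  calc Fintype.card m = (P * Q).rank := (rank_of_isUnit _ hunit).symm
    _ ≤ P.rank := rank_mul_le_left P Q
    _ ≤ Fintype.card n := rank_le_card_width P

def incidenceMatrix (R : Type*) [Zero R] [One R] {ι α : Type*} [DecidableEq α]
    (A : ι → Finset α) : Matrix ι α R :=
  Matrix.of fun i x => if x ∈ A i then 1 else 0

theorem incidenceMatrix_mul_transpose_apply {R ι κ α : Type*} [NonAssocSemiring R] [Fintype α]
    [DecidableEq α] (A : ι → Finset α) (B : κ → Finset α) (i : ι) (j : κ) :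
    (incidenceMatrix R A * (incidenceMatrix R B)ᵀ) i j = #(A i ∩ B j) := by
  simp only [incidenceMatrix, mul_apply, transpose_apply, of_apply, ite_zero_mul_ite_zero, mul_one,
    ← mem_inter, sum_boole, filter_mem_eq_inter, univ_inter]

/-- Skew oddtown theorem (Babai–Frankl). -/
theorem skew_oddtown (n m : ℕ) (A B : Fin m → Finset (Fin n))
    (hdiag : ∀ i, Odd ((A i ∩ B i).card))
    (hoff : ∀ i j : Fin m, i < j → Even ((A i ∩ B j).card)) :
    m ≤ n := by
  simpa using (incidenceMatrix (ZMod 2) A).card_le_of_mul_isLowerTriangular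
    (incidenceMatrix (ZMod 2) B)ᵀ
    (fun i j hji => by
      rw [incidenceMatrix_mul_transpose_apply, ZMod.natCast_eq_zero_iff_even]
      exact hoff i j hji)
    (fun i => by
      rw [incidenceMatrix_mul_transpose_apply, ZMod.natCast_eq_one_iff_odd.mpr (hdiag i)]
      exact isUnit_one)
end

section
/- Let A_1, ..., A_m and B_1, ..., B_m be subsets of [n] such that |A_i ∩ B_j| is even if and only if i ≠ j. If n is odd, then m ≤ n. -/
/-!
Over `ZMod 2` the parity conditions say exactly that `V * Wᵀ = 1`, where `V` and `W` are the
`m × n` incidence matrices of the families `A` and `B`. Hence `m = rank 1 ≤ rank V ≤ n`.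
-/

open Finset Matrix

namespace Matrix

variable {ι κ α R : Type*}

theorem card_le_card_of_mul_eq_one [Fintype ι] [Fintype α] [DecidableEq ι] [CommSemiring R]
    [StrongRankCondition R] {M : Matrix ι α R} {N : Matrix α ι R} (h : M * N = 1) :
    Fintype.card ι ≤ Fintype.card α :=
  calc Fintype.card ι = (M * N).rank := by rw [h, rank_one]
    _ ≤ M.rank := rank_mul_le_left M N
    _ ≤ Fintype.card α := rank_le_card_width M

variable (R) [DecidableEq α]

def incidence [Zero R] [One R] (A : ι → Finset α) : Matrix ι α R :=
  of fun i x => if x ∈ A i then 1 else 0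

theorem incidence_mul_transpose_incidence_apply [Fintype α] [NonAssocSemiring R]
    (A : ι → Finset α) (B : κ → Finset α) (i : ι) (j : κ) :
    (incidence R A * (incidence R B)ᵀ) i j = #(A i ∩ B j) := by
  simp [incidence, mul_apply, ← ite_and, ← mem_inter, inter_comm]

end Matrix

theorem card_le_card_of_even_card_inter_iff_ne {ι α : Type*} [Fintype ι] [DecidableEq ι]
    [Fintype α] [DecidableEq α] (A B : ι → Finset α)
    (h : ∀ i j, Even #(A i ∩ B j) ↔ i ≠ j) :
    Fintype.card ι ≤ Fintype.card α := by
  refine card_le_card_of_mul_eq_one (M := incidence (ZMod 2) A) (N := (incidence (ZMod 2) B)ᵀ) ?_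
  ext i j
  rw [incidence_mul_transpose_incidence_apply, one_apply]
  split_ifs with hij
  · rw [ZMod.natCast_eq_one_iff_odd, ← Nat.not_even_iff_odd, h, not_not]
    exact hij
  · rw [ZMod.natCast_eq_zero_iff_even, h]
    exact hij

theorem bollobas_pair_mod_two_odd_general (n m : ℕ) (A B : Fin m → Finset (Fin n))
    (h : ∀ i j : Fin m, Even ((A i ∩ B j).card) ↔ i ≠ j) :
    m ≤ n := by
  simpa using card_le_card_of_even_card_inter_iff_ne A B h

/-- A Bollobás set pair modulo 2 on `[n]` with `n` odd has size at most `n`. -/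
theorem bollobas_pair_mod_two_odd (n m : ℕ) (A B : Fin m → Finset (Fin n))
    (h : ∀ i j : Fin m, Even ((A i ∩ B j).card) ↔ i ≠ j)
    (hn : Odd n) :
    m ≤ n :=
  bollobas_pair_mod_two_odd_general n m A B h
end

section
/- Let t, k be integers with 2 ≤ t and 2t − 2 ≤ k, and let A_{j,i} ⊆ [n] for j ∈ [k], i ∈ [m] be such that |A_{1,i_1} ∩ ... ∩ A_{k,i_k}| is even if and only if at least t of the indices i_1, ..., i_k are distinct. Then C(m, t−1) ≤ n + 1. -/
/-!
Fix an enumeration of every `(t-1)`-subset `I` of `[m]`, repeated cyclically, and let `r_I` assign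
to row `j` the `(j mod (t-1))`-th element of `I`. For `(t-1)`-subsets `I`, `J`, the tuple that
follows `r_I` on the first `t-1` rows and `r_J` on the others takes exactly the values `I ∪ J`
(this is where `2t-2 ≤ k` enters), and `I ∪ J` has at least `t` elements iff `I ≠ J`. So the
intersections `P_I` of the `A_{j, r_I j}` over the first `t-1` rows and `Q_J` of the
`A_{j, r_J j}` over the other rows form a Bollobás set pair modulo 2: `|P_I ∩ Q_J|` is odd iff
`I = J`. The incidence matrices `X`, `Y` of the `P_I`, `Q_J` over `𝔽₂` then satisfy `X Yᵀ = 1`,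
so `C(m, t-1) = rank (X Yᵀ) ≤ rank X ≤ n`.
-/

open Finset Matrix

theorem Finset.card_le_card_of_odd_card_inter_iff_eq {ι α : Type*} [Fintype ι] [Fintype α]
    [DecidableEq α] (P Q : ι → Finset α) (hPQ : ∀ i j, Odd #(P i ∩ Q j) ↔ i = j) :
    Fintype.card ι ≤ Fintype.card α := by
  classical
  let X : Matrix ι α (ZMod 2) := Matrix.of fun i a => if a ∈ P i then 1 else 0
  let Y : Matrix ι α (ZMod 2) := Matrix.of fun j a => if a ∈ Q j then 1 else 0
  have hXY : X * Yᵀ = 1 := by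
    ext i j
    have hentry : (X * Yᵀ) i j = (#(P i ∩ Q j) : ZMod 2) := by
      simp [X, Y, Matrix.mul_apply, Finset.inter_comm]
    rw [hentry, Matrix.one_apply]
    split_ifs with hij
    · exact ZMod.natCast_eq_one_iff_odd.2 ((hPQ i j).2 hij)
    · exact ZMod.natCast_eq_zero_iff_even.2 (Nat.not_odd_iff_even.1 (mt (hPQ i j).1 hij))
  calc Fintype.card ι = (X * Yᵀ).rank := by rw [hXY, Matrix.rank_one]
    _ ≤ X.rank := Matrix.rank_mul_le_left _ _
    _ ≤ Fintype.card α := Matrix.rank_le_card_width X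

theorem Finset.lt_card_union_iff_ne {α : Type*} [DecidableEq α] {s t : Finset α}
    (hst : #s = #t) : #s < #(s ∪ t) ↔ s ≠ t := by
  constructor
  · rintro hlt rfl
    simp at hlt
  · intro hne
    by_contra! hle
    have hs : s = s ∪ t := eq_of_subset_of_card_le subset_union_left hle
    have ht : t = s ∪ t := eq_of_subset_of_card_le subset_union_right (hst ▸ hle)
    exact hne (hs.trans ht.symm)

theorem Finset.image_piecewise_univ {ι β : Type*} [Fintype ι] [DecidableEq ι] [DecidableEq β]
    (s : Finset ι) (f g : ι → β) :
    univ.image (s.piecewise f g) = s.image f ∪ sᶜ.image g := by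
  ext b
  simp only [mem_image, mem_univ, true_and, mem_union, mem_compl]
  constructor
  · rintro ⟨i, rfl⟩
    by_cases hi : i ∈ s
    · exact Or.inl ⟨i, hi, (piecewise_eq_of_mem s f g hi).symm⟩
    · exact Or.inr ⟨i, hi, (piecewise_eq_of_notMem s f g hi).symm⟩
  · rintro (⟨i, hi, rfl⟩ | ⟨i, hi, rfl⟩)
    · exact ⟨i, piecewise_eq_of_mem s f g hi⟩
    · exact ⟨i, piecewise_eq_of_notMem s f g hi⟩

theorem Finset.inf_piecewise_univ {ι β γ : Type*} [Fintype ι] [DecidableEq ι]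
    [SemilatticeInf γ] [OrderTop γ] (F : ι → β → γ) (s : Finset ι) (f g : ι → β) :
    univ.inf (fun i => F i (s.piecewise f g i)) =
      s.inf (fun i => F i (f i)) ⊓ sᶜ.inf (fun i => F i (g i)) := by
  rw [← union_compl s, inf_union]
  congr 1
  · exact inf_congr rfl fun i hi => by rw [piecewise_eq_of_mem s f g hi]
  · exact inf_congr rfl fun i hi => by rw [piecewise_eq_of_notMem s f g (mem_compl.1 hi)]

section CyclicEnum

variable {α : Type*} [LinearOrder α] {p : ℕ}

def Finset.cyclicEnum (s : Finset α) (hs : #s = p) (hp : 0 < p) (j : ℕ) : α :=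
  s.orderEmbOfFin hs ⟨j % p, Nat.mod_lt j hp⟩

variable (s : Finset α) (hs : #s = p) (hp : 0 < p)

theorem Finset.cyclicEnum_mem (j : ℕ) : s.cyclicEnum hs hp j ∈ s :=
  s.orderEmbOfFin_mem hs _

theorem Finset.exists_lt_cyclicEnum_eq {a : α} (ha : a ∈ s) :
    ∃ r < p, s.cyclicEnum hs hp r = a := by
  obtain ⟨⟨r, hr⟩, hra⟩ : a ∈ Set.range (s.orderEmbOfFin hs) := by
    rwa [range_orderEmbOfFin]
  exact ⟨r, hr, by simpa [cyclicEnum, Nat.mod_eq_of_lt hr] using hra⟩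

theorem Finset.image_cyclicEnum_eq {β : Type*} (R : Finset β) (e : β → ℕ)
    (hR : ∀ r < p, ∃ b ∈ R, e b % p = r) :
    R.image (fun b => s.cyclicEnum hs hp (e b)) = s := by
  refine Subset.antisymm (image_subset_iff.2 fun b _ => s.cyclicEnum_mem hs hp _) fun a ha => ?_
  obtain ⟨r, hr, rfl⟩ := s.exists_lt_cyclicEnum_eq hs hp ha
  obtain ⟨b, hb, hbr⟩ := hR r hr
  exact mem_image.2 ⟨b, hb, by simp only [cyclicEnum, hbr, Nat.mod_eq_of_lt hr]⟩

end CyclicEnum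

/-- For a Bollobás set `(k,t)`-tuple modulo 2 with `2 ≤ t` and `2t - 2 ≤ k`,
we have `C(m, t-1) ≤ n + 1`. -/
theorem bollobas_kt_tuple_binomial_bound (n m k t : ℕ) (ht : 2 ≤ t)
    (hk : 2 * t - 2 ≤ k)
    (A : Fin k → Fin m → Finset (Fin n))
    (hA : ∀ i : Fin k → Fin m,
      Even ((Finset.inf (Finset.univ : Finset (Fin k)) fun j => A j (i j)).card) ↔
        t ≤ ((Finset.univ : Finset (Fin k)).image i).card) :
    Nat.choose m (t - 1) ≤ n + 1 := by
  classical
  have hp : 0 < t - 1 := by omega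
  let L : Finset (Fin k) := univ.filter fun j => (j : ℕ) < t - 1
  let row (I : {I : Finset (Fin m) // #I = t - 1}) (j : Fin k) : Fin m := I.1.cyclicEnum I.2 hp j
  let P I := L.inf fun j => A j (row I j)
  let Q J := Lᶜ.inf fun j => A j (row J j)
  have hPQ : ∀ I J, Odd #(P I ∩ Q J) ↔ I = J := by
    intro I J
    have hIJ := hA (L.piecewise (row I) (row J))
    have hI : L.image (row I) = I := I.1.image_cyclicEnum_eq I.2 hp L Fin.val fun r hr =>
      ⟨⟨r, by omega⟩, by simpa [L] using hr, Nat.mod_eq_of_lt hr⟩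
    have hJ : Lᶜ.image (row J) = J := J.1.image_cyclicEnum_eq J.2 hp Lᶜ Fin.val fun r hr =>
      ⟨⟨r + (t - 1), by omega⟩, by simp [L]; omega, by simp [Nat.mod_eq_of_lt hr]⟩
    rw [inf_piecewise_univ, image_piecewise_univ, hI, hJ] at hIJ
    rw [← Nat.not_even_iff_odd, Subtype.ext_iff, ← not_iff_not, not_not, ← ne_eq,
      ← lt_card_union_iff_ne (I.2.trans J.2.symm), I.2]
    exact hIJ.trans ⟨fun h => by omega, fun h => by omega⟩
  have hcard := card_le_card_of_odd_card_inter_iff_eq P Q hPQ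
  rw [Fintype.card_finset_len, Fintype.card_fin, Fintype.card_fin] at hcard
  exact hcard.trans n.le_succ
end

section
/- Let t, k be integers with 2 ≤ t ≤ k and 2t − 2 ≤ k. If A ⊆ 2^[n] is a family of m distinct sets such that the intersection of any d distinct members of A has odd size whenever 1 ≤ d < t and even size whenever t ≤ d ≤ k, then m ≤ (t−1+o(1)) n^{1/(t−1)}; in particular m^{t−1} ≤ (t−1)^{t−1}(n+1). -/
/-!
For each `(t-1)`-subset `S` of the family take the characteristic vector over `𝔽₂` of
`⋂ i ∈ S, A i`. The dot product of the vectors of `S` and `T` is the parity of the intersection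
of the `|S ∪ T|` sets indexed by `S ∪ T`: odd if `S = T`, even if `S ≠ T`, since then
`t ≤ |S ∪ T| ≤ 2t - 2 ≤ k`. So these `C(m, t-1)` vectors are linearly independent in `𝔽₂ⁿ`,
and `m ^ (t-1) ≤ (t-1) ^ (t-1) * C(m, t-1)` turns `C(m, t-1) ≤ n` into the bound.
-/

open Finset Matrix

namespace Nat

lemma pow_mul_factorial_le_pow_mul_descFactorial {n r : ℕ} (h : r ≤ n) :
    n ^ r * r ! ≤ r ^ r * n.descFactorial r := by
  have hterm : ∀ i ∈ range r, n * (r - i) ≤ r * (n - i) := fun i _ => by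
    rw [Nat.mul_sub, Nat.mul_sub, Nat.mul_comm n r]
    exact Nat.sub_le_sub_left (Nat.mul_le_mul_right i h) _
  calc n ^ r * r !
      = ∏ i ∈ range r, n * (r - i) := by
        rw [prod_mul_distrib, prod_const, card_range, ← descFactorial_eq_prod_range,
          descFactorial_self]
    _ ≤ ∏ i ∈ range r, r * (n - i) := prod_le_prod' hterm
    _ = r ^ r * n.descFactorial r := by
        rw [prod_mul_distrib, prod_const, card_range, ← descFactorial_eq_prod_range]

theorem pow_le_pow_mul_choose {n r : ℕ} (h : r ≤ n) : n ^ r ≤ r ^ r * n.choose r := by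
  refine Nat.le_of_mul_le_mul_right ?_ r.factorial_pos
  calc n ^ r * r !
      ≤ r ^ r * n.descFactorial r := pow_mul_factorial_le_pow_mul_descFactorial h
    _ = r ^ r * n.choose r * r ! := by
        rw [descFactorial_eq_factorial_mul_choose]; ring

end Nat

theorem card_le_card_of_dotProduct_orthogonal {K ι α : Type*} [Field K] [Fintype ι]
    [Fintype α] {v : ι → α → K} (horth : ∀ i j, i ≠ j → v i ⬝ᵥ v j = 0)
    (hself : ∀ i, v i ⬝ᵥ v i ≠ 0) : Fintype.card ι ≤ Fintype.card α := by
  have hli : LinearIndependent K v :=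
    LinearMap.linearIndependent_of_isOrthoᵢ (B := dotProductBilin K K)
      (LinearMap.isOrthoᵢ_def.mpr horth) hself
  simpa using hli.fintype_card_le_finrank

lemma dotProduct_ite_mem {R α : Type*} [NonAssocSemiring R] [Fintype α] [DecidableEq α]
    (X Y : Finset α) :
    (fun x => if x ∈ X then (1 : R) else 0) ⬝ᵥ (fun x => if x ∈ Y then 1 else 0) = #(X ∩ Y) := by
  simp [dotProduct, ← ite_and, ← mem_inter, and_comm]

lemma lt_card_union_of_card_eq_of_ne {α : Type*} [DecidableEq α] {S T : Finset α}
    (hST : #S = #T) (hne : S ≠ T) : #S < #(S ∪ T) := by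
  refine card_lt_card (left_lt_sup.mpr fun hTS => hne ?_)
  exact (eq_of_subset_of_card_le hTS hST.le).symm

theorem choose_card_le_card_of_odd_of_even {ι α : Type*} [Fintype ι] [Fintype α]
    [DecidableEq ι] [DecidableEq α] (A : ι → Finset α) (r : ℕ)
    (hodd : ∀ s : Finset ι, #s = r → Odd #(s.inf A))
    (heven : ∀ s : Finset ι, r < #s → #s ≤ 2 * r → Even #(s.inf A)) :
    (Fintype.card ι).choose r ≤ Fintype.card α := by
  let v : powersetCard r (univ : Finset ι) → α → ZMod 2 :=
    fun S x => if x ∈ (S : Finset ι).inf A then 1 else 0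
  have hv : ∀ S T, v S ⬝ᵥ v T = #(((S : Finset ι) ∪ T).inf A) := fun S T => by
    rw [dotProduct_ite_mem, inf_union, inf_eq_inter]
  have hcard : ∀ S : powersetCard r (univ : Finset ι), #(S : Finset ι) = r :=
    fun S => mem_powersetCard_univ.mp S.2
  have horth : ∀ S T, S ≠ T → v S ⬝ᵥ v T = 0 := fun S T hST => by
    rw [hv, ZMod.natCast_eq_zero_iff_even]
    refine heven _ ?_ ((card_union_le _ _).trans (by rw [hcard, hcard]; omega))
    simpa only [hcard S] using
      lt_card_union_of_card_eq_of_ne (by rw [hcard, hcard]) (Subtype.coe_injective.ne hST)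
  have hself : ∀ S, v S ⬝ᵥ v S ≠ 0 := fun S => by
    rw [hv, union_self, ZMod.natCast_eq_one_iff_odd.mpr (hodd _ (hcard S))]
    exact one_ne_zero
  simpa using card_le_card_of_dotProduct_orthogonal horth hself

theorem kt_oddtown_bound_general (n m k t : ℕ) (ht : 2 ≤ t)
    (h2t : 2 * t - 2 ≤ k)
    (A : Fin m → Finset (Fin n))
    (hodd : ∀ s : Finset (Fin m), s.Nonempty → s.card < t → Odd ((s.inf A).card))
    (heven : ∀ s : Finset (Fin m), t ≤ s.card → s.card ≤ k → Even ((s.inf A).card)) :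
    m ^ (t - 1) ≤ (t - 1) ^ (t - 1) * (n + 1) := by
  have hchoose : m.choose (t - 1) ≤ n := by
    simpa using choose_card_le_card_of_odd_of_even A (t - 1)
      (fun s hs => hodd s (card_pos.mp (by omega)) (by omega))
      (fun s hlow hhigh => heven s (by omega) (by omega))
  rcases le_or_gt (t - 1) m with hm | hm
  · calc m ^ (t - 1) ≤ (t - 1) ^ (t - 1) * m.choose (t - 1) := Nat.pow_le_pow_mul_choose hm
      _ ≤ (t - 1) ^ (t - 1) * (n + 1) := Nat.mul_le_mul_left _ (by omega)
  · calc m ^ (t - 1) ≤ (t - 1) ^ (t - 1) := Nat.pow_le_pow_left hm.le _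
      _ ≤ (t - 1) ^ (t - 1) * (n + 1) := Nat.le_mul_of_pos_right _ (by omega)

/-- A family following `(k,t)`-oddtown rules with `2 ≤ t ≤ k` and `2t - 2 ≤ k`
satisfies `m^(t-1) ≤ (t-1)^(t-1) * (n+1)`. -/
theorem kt_oddtown_bound (n m k t : ℕ) (ht : 2 ≤ t) (htk : t ≤ k)
    (h2t : 2 * t - 2 ≤ k)
    (A : Fin m → Finset (Fin n)) (hinj : Function.Injective A)
    (hodd : ∀ s : Finset (Fin m), s.Nonempty → s.card < t → Odd ((s.inf A).card))
    (heven : ∀ s : Finset (Fin m), t ≤ s.card → s.card ≤ k → Even ((s.inf A).card)) :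
    m ^ (t - 1) ≤ (t - 1) ^ (t - 1) * (n + 1) :=
  kt_oddtown_bound_general n m k t ht h2t A hodd heven
end

section
/- Let {C_i : i ∈ [t]} be complete 2k-partite 2k-graphs forming a modulo 2 cover of H_{2k,2k}(n) (the ordered tuples in [n]^{2k} with all 2k coordinates distinct). Then the ordered Kneser graph OK_{n:k}, whose vertices are ordered k-tuples of distinct elements of [n] and whose edges join tuples with disjoint underlying sets, admits a modulo 2 biclique cover of size t. -/
/-!
Concatenating an ordered `k`-tuple `u` with an ordered `k`-tuple `v` gives a `2k`-tuple
`Fin.append u v`, which lies in the box `C i` exactly when `u` lies in the box formed by its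
first `k` sides and `v` in the box formed by its last `k` sides. So the number of bicliques
covering `(u, v)` is the number of boxes containing `Fin.append u v`, which is odd iff that
tuple is injective, i.e. (as `u` and `v` are injective) iff `u` and `v` have disjoint images.
-/

open Finset

theorem exists_modTwo_bicliqueCover_of_modTwo_boxCover {ι α : Type*} [Fintype ι] [Fintype α]
    [DecidableEq α] {m m' : ℕ}
    (C : ι → Fin (m + m') → Finset α)
    (hcov : ∀ e : Fin (m + m') → α,
      Odd #{i | ∀ j, e j ∈ C i j} ↔ Function.Injective e) :
    ∃ (P : ι → Finset {f : Fin m → α // Function.Injective f})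
      (Q : ι → Finset {f : Fin m' → α // Function.Injective f}),
      ∀ u v, Odd #{i | u ∈ P i ∧ v ∈ Q i} ↔ ∀ a b, u.1 a ≠ v.1 b := by
  refine ⟨fun i => {u | ∀ a, u.1 a ∈ C i (Fin.castAdd m' a)},
    fun i => {v | ∀ b, v.1 b ∈ C i (Fin.natAdd m b)}, fun u v => ?_⟩
  have h := hcov (Fin.append u.1 v.1)
  simp only [Fin.forall_fin_add, Fin.append_left, Fin.append_right, Fin.append_injective_iff,
    u.2, v.2, true_and] at h
  simpa only [mem_filter, mem_univ, true_and] using h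

theorem mod_two_biclique_cover_ordered_kneser_general (n k t : ℕ)
    (C : Fin t → Fin (2 * k) → Finset (Fin n))
    (hcov : ∀ e : Fin (2 * k) → Fin n,
      Odd ((Finset.univ.filter fun c : Fin t => ∀ j, e j ∈ C c j).card) ↔
        Function.Injective e) :
    ∃ P Q : Fin t → Finset {f : Fin k → Fin n // Function.Injective f},
      ∀ u v : {f : Fin k → Fin n // Function.Injective f},
        (Odd ((Finset.univ.filter fun c : Fin t => u ∈ P c ∧ v ∈ Q c).card) ↔
          ∀ a b : Fin k, u.1 a ≠ v.1 b) := by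
  let σ := finCongr (two_mul k)
  refine exists_modTwo_bicliqueCover_of_modTwo_boxCover (fun c => C c ∘ σ.symm) fun e => ?_
  simpa only [Function.comp_apply, σ.forall_congr_left, σ.apply_symm_apply,
    σ.injective_comp] using hcov (e ∘ σ)

/-- From a modulo 2 cover of `H_{2k,2k}(n)` by `t` complete `2k`-partite
`2k`-graphs, one obtains a modulo 2 biclique cover of the ordered Kneser graph
`OK_{n:k}` of size `t`: each pair of vertices is covered an odd number of times
iff the underlying `k`-sets are disjoint. -/
theorem mod_two_biclique_cover_ordered_kneser (n k t : ℕ) (hk : 1 ≤ k)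
    (C : Fin t → Fin (2 * k) → Finset (Fin n))
    (hcov : ∀ e : Fin (2 * k) → Fin n,
      Odd ((Finset.univ.filter fun c : Fin t => ∀ j, e j ∈ C c j).card) ↔
        Function.Injective e) :
    ∃ P Q : Fin t → Finset {f : Fin k → Fin n // Function.Injective f},
      ∀ u v : {f : Fin k → Fin n // Function.Injective f},
        (Odd ((Finset.univ.filter fun c : Fin t => u ∈ P c ∧ v ∈ Q c).card) ↔
          ∀ a b : Fin k, u.1 a ≠ v.1 b) :=
  mod_two_biclique_cover_ordered_kneser_general n k t C hcov
end

section
/- Let G be a graph and suppose bicliques B_1, ..., B_t cover each edge of G an odd number of times and each non-edge an even number of times. Then t ≥ (1/2) · rank_{F_2}(A(G)), where A(G) is the adjacency matrix of G over F_2. -/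
/-!
Over `ZMod 2` the adjacency matrix is the sum of the biclique matrices `1_P 1_Qᵀ + 1_Q 1_Pᵀ`:
since `P` and `Q` are disjoint, each such matrix is the 0/1 indicator of the biclique's edges,
and the number of bicliques covering `uv`, reduced mod 2, is the `uv` entry of `A(G)`.
Each summand has rank at most 2, and rank is subadditive.
-/

open Matrix Finset

namespace Matrix

variable {m n K : Type*} [Fintype n] [Field K]

theorem rank_add_le [Finite m] (A B : Matrix m n K) : (A + B).rank ≤ A.rank + B.rank := by
  have := Fintype.ofFinite m
  have hrange : LinearMap.range (A + B).mulVecLin ≤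
      LinearMap.range A.mulVecLin ⊔ LinearMap.range B.mulVecLin := by
    rintro _ ⟨x, rfl⟩
    rw [Matrix.mulVecLin_add, LinearMap.add_apply]
    exact Submodule.add_mem_sup (LinearMap.mem_range_self _ x) (LinearMap.mem_range_self _ x)
  exact (Submodule.finrank_mono hrange).trans (Submodule.finrank_add_le_finrank_add_finrank _ _)

theorem rank_sum_le [Finite m] {ι : Type*} (s : Finset ι) (A : ι → Matrix m n K) :
    (∑ i ∈ s, A i).rank ≤ ∑ i ∈ s, (A i).rank :=
  Finset.le_sum_of_subadditive (fun B : Matrix m n K => B.rank) rank_zero.le rank_add_le s A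

end Matrix

section Biclique

variable {V : Type*} [DecidableEq V]

def Finset.indicatorVec (R : Type*) [Zero R] [One R] (P : Finset V) : V → R :=
  fun v => if v ∈ P then 1 else 0

def bicliqueMatrix (R : Type*) [Semiring R] (P Q : Finset V) : Matrix V V R :=
  vecMulVec (P.indicatorVec R) (Q.indicatorVec R) + vecMulVec (Q.indicatorVec R) (P.indicatorVec R)

theorem rank_bicliqueMatrix_le [Fintype V] {K : Type*} [Field K] (P Q : Finset V) :
    (bicliqueMatrix K P Q).rank ≤ 2 :=
  (rank_add_le _ _).trans (add_le_add (rank_vecMulVec_le _ _) (rank_vecMulVec_le _ _))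

theorem bicliqueMatrix_apply_of_disjoint {R : Type*} [Semiring R] {P Q : Finset V}
    (h : Disjoint P Q) (u v : V) :
    bicliqueMatrix R P Q u v = if (u ∈ P ∧ v ∈ Q) ∨ (u ∈ Q ∧ v ∈ P) then 1 else 0 := by
  have := Finset.disjoint_left.mp h
  by_cases hu : u ∈ P <;> by_cases hv : v ∈ P <;>
    simp [bicliqueMatrix, Finset.indicatorVec, vecMulVec_apply, hu, hv, this]

theorem sum_bicliqueMatrix_apply_of_disjoint {R : Type*} [Semiring R] {ι : Type*} [Fintype ι]
    {P Q : ι → Finset V} (h : ∀ c, Disjoint (P c) (Q c)) (u v : V) :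
    (∑ c, bicliqueMatrix R (P c) (Q c)) u v =
      (#{c | (u ∈ P c ∧ v ∈ Q c) ∨ (u ∈ Q c ∧ v ∈ P c)} : ℕ) := by
  simp only [Matrix.sum_apply, bicliqueMatrix_apply_of_disjoint (h _), Finset.sum_boole]

theorem ZMod.natCast_eq_ite_odd (n : ℕ) : (n : ZMod 2) = if Odd n then 1 else 0 := by
  split_ifs with h
  · exact ZMod.natCast_eq_one_iff_odd.mpr h
  · exact ZMod.natCast_eq_zero_iff_even.mpr (Nat.not_odd_iff_even.mp h)

theorem SimpleGraph.adjMatrix_eq_sum_bicliqueMatrix [Fintype V]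
    (G : SimpleGraph V) [DecidableRel G.Adj] {ι : Type*} [Fintype ι]
    (P Q : ι → Finset V) (hd : ∀ c, Disjoint (P c) (Q c))
    (hcov : ∀ u v : V,
      (Odd (#{c | (u ∈ P c ∧ v ∈ Q c) ∨ (u ∈ Q c ∧ v ∈ P c)}) ↔ G.Adj u v)) :
    G.adjMatrix (ZMod 2) = ∑ c, bicliqueMatrix (ZMod 2) (P c) (Q c) := by
  ext u v
  rw [sum_bicliqueMatrix_apply_of_disjoint hd, ZMod.natCast_eq_ite_odd, adjMatrix_apply]
  exact if_congr (hcov u v).symm rfl rfl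

end Biclique

/-- If bicliques `(P c, Q c)`, `c ∈ [t]`, cover each edge of `G` an odd number
of times and each non-edge an even number of times, then
`t ≥ (1/2)·rank_{F₂}(A(G))`. -/
theorem biclique_mod_two_cover_rank_bound {V : Type*} [Fintype V] [DecidableEq V]
    (G : SimpleGraph V) [DecidableRel G.Adj] (t : ℕ)
    (P Q : Fin t → Finset V) (hd : ∀ c, Disjoint (P c) (Q c))
    (hcov : ∀ u v : V,
      (Odd ((Finset.univ.filter fun c : Fin t =>
        (u ∈ P c ∧ v ∈ Q c) ∨ (u ∈ Q c ∧ v ∈ P c)).card) ↔ G.Adj u v)) :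
    (G.adjMatrix (ZMod 2)).rank ≤ 2 * t := by
  rw [G.adjMatrix_eq_sum_bicliqueMatrix P Q hd hcov]
  calc (∑ c, bicliqueMatrix (ZMod 2) (P c) (Q c)).rank
      ≤ ∑ c, (bicliqueMatrix (ZMod 2) (P c) (Q c)).rank := rank_sum_le _ _
    _ ≤ ∑ _c : Fin t, 2 := Finset.sum_le_sum fun c _ => rank_bicliqueMatrix_le _ _
    _ = 2 * t := by simp [mul_comm]
end

section
/- For all t ≥ 2, the number of set partitions of [k] into at most t−1 parts, weighted by falling factorials, satisfies Σ_{π : |π| ≤ t−1} n(n−1)⋯(n−|π|+2) ≤ (S(k,t−1) + ... + S(k,1)) n^{t−2+1}, and in particular f_{k,t}(n) ≤ 1 + (S(k,t) + o(1)) n^{t−1} ≤ (t^k/t! + o(1)) n^{t−1}, where S(k,t) is the Stirling number of the second kind. -/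
/-!
A tuple `e ∈ [n]^k` lies in the cube `S^k` iff its set of values `I` is contained in `S`. So it
suffices to find a family `F` of nonempty sets `S ⊆ [n]` such that a nonempty `I` lies in an odd
number of members of `F` exactly when `|I| < t`: the cubes over `F` together with the full cube
`[n]^k` then form a modulo 2 cover of `H_{k,t}(n)`. Möbius inversion on the Boolean lattice,
which over `𝔽₂` has no signs, produces such an `F`: the nonempty sets with an odd number of
supersets of size at most `t - 1`. Each of them is the set of values of a map `[t-1] → [n]`, so
`f_{k,t}(n) ≤ n^{t-1} + 1`, and both asymptotic bounds follow from `S(k,t) ≥ 1` and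
`t^k / t! ≥ 1`. The falling-factorial inequality holds term by term.
-/

/-- Stirling numbers of the second kind. -/
def stirling2 : ℕ → ℕ → ℕ
  | 0, 0 => 1
  | 0, _ + 1 => 0
  | _ + 1, 0 => 0
  | k + 1, j + 1 => (j + 1) * stirling2 k (j + 1) + stirling2 k j

/-- `Y` is a modulo 2 cover of `H_{k,t}(n)` by complete `k`-partite `k`-graphs:
each tuple with at least `t` distinct coordinates is covered an odd number of
times, every other tuple an even number of times. -/
def IsMod2Cover (n k t m : ℕ) (Y : Fin m → Fin k → Finset (Fin n)) : Prop :=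
  ∀ e : Fin k → Fin n,
    Odd ((Finset.univ.filter fun c : Fin m => ∀ j, e j ∈ Y c j).card) ↔
      t ≤ ((Finset.univ : Finset (Fin k)).image e).card

/-- `f_{k,t}(n)`: the minimum size of a modulo 2 cover of `H_{k,t}(n)`. -/
noncomputable def fkt (k t n : ℕ) : ℕ :=
  sInf {m | ∃ Y : Fin m → Fin k → Finset (Fin n), IsMod2Cover n k t m Y}

open Finset

theorem one_le_stirling2 : ∀ {k t : ℕ}, 1 ≤ t → t ≤ k → 1 ≤ stirling2 k t
  | 0, _, h, h' | _, 0, h, h' => by omega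
  | 1, 1, _, _ => le_rfl
  | k + 2, 1, _, _ => by
      show 1 ≤ 1 * stirling2 (k + 1) 1 + stirling2 (k + 1) 0
      have := one_le_stirling2 (k := k + 1) le_rfl (by omega)
      omega
  | k + 1, t + 2, _, h => by
      show 1 ≤ (t + 2) * stirling2 k (t + 2) + stirling2 k (t + 1)
      have := one_le_stirling2 (k := k) (t := t + 1) (by omega) (by omega)
      omega

theorem one_le_pow_div_factorial {t k : ℕ} (ht : 1 ≤ t) (htk : t ≤ k) :
    1 ≤ (t : ℝ) ^ k / t.factorial := by
  rw [one_le_div (by positivity)]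
  exact_mod_cast t.factorial_le_pow.trans (Nat.pow_le_pow_right ht htk)

theorem sum_mul_descFactorial_le (f : ℕ → ℕ) {n m p : ℕ} (hn : 1 ≤ n) (hmp : m ≤ p + 1) :
    ∑ j ∈ Icc 1 m, f j * n.descFactorial (j - 1) ≤ (∑ j ∈ Icc 1 m, f j) * n ^ p := by
  rw [sum_mul]
  refine sum_le_sum fun j hj => Nat.mul_le_mul_left _ ?_
  have hj : j - 1 ≤ p := by grind
  exact (n.descFactorial_le_pow _).trans (Nat.pow_le_pow_right hn hj)

theorem natCast_card_filter_odd {ι : Type*} (s : Finset ι) (f : ι → ℕ) :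
    (#{i ∈ s | Odd (f i)} : ZMod 2) = ∑ i ∈ s, (f i : ZMod 2) := by
  rw [natCast_card_filter]
  refine sum_congr rfl fun i _ => ?_
  rcases Nat.even_or_odd (f i) with h | h
  · rw [if_neg (Nat.not_odd_iff_even.2 h), ZMod.natCast_eq_zero_iff_even.2 h]
  · rw [if_pos h, ZMod.natCast_eq_one_iff_odd.2 h]

theorem exists_image_univ_eq {α : Type*} [DecidableEq α] {d : ℕ} {S : Finset α}
    (hS : S.Nonempty) (hSd : #S ≤ d) :
    ∃ e : Fin d → α, univ.image e = S := by
  have : Nonempty S := hS.to_subtype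
  set f : S → Fin d := fun x => Fin.castLE hSd (S.equivFin x)
  have hf : Function.Injective f := (Fin.castLE_injective hSd).comp S.equivFin.injective
  refine ⟨fun i => ((Function.invFun f i : S) : α), ?_⟩
  ext x
  simp only [mem_image, mem_univ, true_and]
  refine ⟨fun ⟨i, hi⟩ => hi ▸ (Function.invFun f i).2, fun hx => ?_⟩
  obtain ⟨i, hi⟩ := Function.invFun_surjective hf ⟨x, hx⟩
  exact ⟨i, congrArg Subtype.val hi⟩

section FinsetLattice

variable {α : Type*} [Fintype α] [DecidableEq α]

theorem sum_superset_sum_superset_zmod_two (g : Finset α → ZMod 2) (I : Finset α) :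
    ∑ S with I ⊆ S, ∑ T with S ⊆ T, g T = g I := by
  have hswap : ∑ S with I ⊆ S, ∑ T with S ⊆ T, g T = ∑ T with I ⊆ T, #(Icc I T) • g T := by
    rw [sum_comm' (t' := {T | I ⊆ T}) (s' := fun T => Icc I T)]
    · simp only [sum_const]
    · intro S T
      simp only [mem_filter, mem_univ, true_and, mem_Icc]
      exact ⟨fun h => ⟨h, h.1.trans h.2⟩, fun h => h.1⟩
  -- each `T ⊋ I` is counted `2 ^ #(T \ I)` times, an even number
  have hcount : ∀ T, I ⊆ T → (#(Icc I T) : ZMod 2) = if T = I then 1 else 0 := by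
    intro T hIT
    rw [card_Icc_finset hIT, Nat.cast_pow, Nat.cast_ofNat, show (2 : ZMod 2) = 0 from rfl,
      zero_pow_eq]
    congr 1
    exact propext ⟨fun h => (eq_of_subset_of_card_le hIT (by omega)).symm, fun h => by simp [h]⟩
  rw [hswap, sum_congr rfl fun T hT => by rw [nsmul_eq_mul, hcount T (mem_filter.1 hT).2]]
  simp

theorem card_nonempty_card_le_le_pow (d : ℕ) :
    #{S : Finset α | S.Nonempty ∧ #S ≤ d} ≤ Fintype.card α ^ d := by
  calc #{S : Finset α | S.Nonempty ∧ #S ≤ d}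
      ≤ #(univ.image fun e : Fin d → α => univ.image e) := by
        refine card_le_card fun S hS => ?_
        obtain ⟨hne, hSd⟩ := (mem_filter.1 hS).2
        simpa using exists_image_univ_eq hne hSd
    _ ≤ Fintype.card α ^ d := by
        simpa using card_image_le (s := (univ : Finset (Fin d → α)))

variable (α) in
def oddSupersetFamily (d : ℕ) : Finset (Finset α) :=
  {S | S.Nonempty ∧ Odd #{T | S ⊆ T ∧ #T ≤ d}}

theorem odd_card_superset_oddSupersetFamily_iff {d : ℕ} {I : Finset α} (hI : I.Nonempty) :
    Odd #{S ∈ oddSupersetFamily α d | I ⊆ S} ↔ #I ≤ d := by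
  have hfilter : {S ∈ oddSupersetFamily α d | I ⊆ S}
      = ({S | I ⊆ S ∧ Odd #{T | S ⊆ T ∧ #T ≤ d}} : Finset (Finset α)) := by
    ext S
    simp only [oddSupersetFamily, mem_filter, mem_univ, true_and]
    exact ⟨fun h => ⟨h.2, h.1.2⟩, fun h => ⟨⟨hI.mono h.1, h.2⟩, h.1⟩⟩
  have hcast : (#{S ∈ oddSupersetFamily α d | I ⊆ S} : ZMod 2) = if #I ≤ d then 1 else 0 := by
    rw [hfilter, ← filter_filter, natCast_card_filter_odd, ←
      sum_superset_sum_superset_zmod_two (fun T => if #T ≤ d then 1 else 0) I]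
    refine sum_congr rfl fun S _ => ?_
    rw [← filter_filter, natCast_card_filter]
  rw [← ZMod.natCast_eq_one_iff_odd, hcast]
  split_ifs <;> simp_all

theorem card_oddSupersetFamily_le (d : ℕ) : #(oddSupersetFamily α d) ≤ Fintype.card α ^ d := by
  refine le_trans (card_le_card fun S hS => ?_) (card_nonempty_card_le_le_pow d)
  obtain ⟨hne, hodd⟩ := (mem_filter.1 hS).2
  obtain ⟨T, hT⟩ := card_pos.1 hodd.pos
  obtain ⟨hST, hTd⟩ := (mem_filter.1 hT).2
  exact mem_filter.2 ⟨mem_univ _, hne, (card_le_card hST).trans hTd⟩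

end FinsetLattice

noncomputable def indexedWithUniv {α : Type*} [Fintype α] (F : Finset (Finset α)) :
    Fin (#F + 1) → Finset α :=
  Fin.snoc (α := fun _ => Finset α) (fun i => (F.equivFin.symm i : Finset α)) univ

theorem card_filter_subset_indexedWithUniv {α : Type*} [Fintype α] [DecidableEq α]
    (F : Finset (Finset α)) (I : Finset α) :
    #{c | I ⊆ indexedWithUniv F c} = #{S ∈ F | I ⊆ S} + 1 := by
  rw [card_filter, card_filter, Fin.sum_univ_castSucc]
  simp only [indexedWithUniv, Fin.snoc_castSucc, Fin.snoc_last, subset_univ, if_true]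
  congr 1
  exact (Equiv.sum_comp F.equivFin.symm fun S : F => if I ⊆ (S : Finset α) then 1 else 0).trans
    (sum_coe_sort F fun S => if I ⊆ S then 1 else 0)

theorem fkt_le_card_add_one {n k t : ℕ} (hk : k ≠ 0) (F : Finset (Finset (Fin n)))
    (hF : ∀ I : Finset (Fin n), I.Nonempty → (Odd #{S ∈ F | I ⊆ S} ↔ #I < t)) :
    fkt k t n ≤ #F + 1 := by
  refine Nat.sInf_le ⟨fun c _ => indexedWithUniv F c, fun e => ?_⟩
  have hI : (univ.image e).Nonempty := univ_nonempty_iff.2 ⟨⟨0, Nat.pos_of_ne_zero hk⟩⟩ |>.image e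
  have hmem : ∀ B : Finset (Fin n), (∀ j, e j ∈ B) ↔ univ.image e ⊆ B := by
    simp [image_subset_iff]
  simp only [hmem]
  rw [card_filter_subset_indexedWithUniv, Nat.odd_add_one, hF _ hI, not_lt]

theorem fkt_le_pow_add_one {k t : ℕ} (hk : k ≠ 0) (ht : t ≠ 0) (n : ℕ) :
    fkt k t n ≤ n ^ (t - 1) + 1 := by
  calc fkt k t n ≤ #(oddSupersetFamily (Fin n) (t - 1)) + 1 :=
        fkt_le_card_add_one hk _ fun I hI => by
          rw [odd_card_superset_oddSupersetFamily_iff hI]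
          omega
    _ ≤ n ^ (t - 1) + 1 := by
        simpa using Nat.add_le_add_right (card_oddSupersetFamily_le (α := Fin n) (t - 1)) 1

/-- Grouping set partitions of `[k]` with at most `t-1` parts by their number
of parts, `∑_{j=1}^{t-1} S(k,j)·n(n-1)⋯(n-j+2) ≤ (S(k,t-1)+⋯+S(k,1))·n^{t-1}`;
in particular `f_{k,t}(n) ≤ 1 + (S(k,t) + o(1))·n^{t-1} ≤ (t^k/t! + o(1))·n^{t-1}`. -/
theorem fkt_upper (k t : ℕ) (ht : 2 ≤ t) (htk : t ≤ k) :
    (∀ n : ℕ, 1 ≤ n →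
      ∑ j ∈ Finset.Icc 1 (t - 1), stirling2 k j * n.descFactorial (j - 1) ≤
        (∑ j ∈ Finset.Icc 1 (t - 1), stirling2 k j) * n ^ (t - 2 + 1)) ∧
    (∀ ε : ℝ, 0 < ε → ∃ N : ℕ, ∀ n : ℕ, N ≤ n →
      (fkt k t n : ℝ) ≤ 1 + ((stirling2 k t : ℝ) + ε) * (n : ℝ) ^ (t - 1) ∧
      (fkt k t n : ℝ) ≤ ((t : ℝ) ^ k / (Nat.factorial t : ℝ) + ε) * (n : ℝ) ^ (t - 1)) := by
  refine ⟨fun n hn => sum_mul_descFactorial_le _ hn (by omega),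
    fun ε hε => ⟨⌈ε⁻¹⌉₊ + 1, fun n hn => ?_⟩⟩
  have hfkt : (fkt k t n : ℝ) ≤ n ^ (t - 1) + 1 := by
    exact_mod_cast fkt_le_pow_add_one (by omega) (by omega) n
  have hS : (1 : ℝ) ≤ stirling2 k t := by exact_mod_cast one_le_stirling2 (by omega) htk
  have hfac : 1 ≤ (t : ℝ) ^ k / t.factorial := one_le_pow_div_factorial (by omega) htk
  have hn1 : (1 : ℝ) ≤ n := by exact_mod_cast (by omega : 1 ≤ n)
  have hεn : 1 ≤ ε * n := by
    have hinv : ε⁻¹ ≤ n := (Nat.le_ceil _).trans (by exact_mod_cast (by omega : ⌈ε⁻¹⌉₊ ≤ n))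
    calc (1 : ℝ) = ε * ε⁻¹ := (mul_inv_cancel₀ hε.ne').symm
      _ ≤ ε * n := mul_le_mul_of_nonneg_left hinv hε.le
  have hpow : (n : ℝ) ≤ n ^ (t - 1) := le_self_pow₀ hn1 (by omega)
  constructor <;> nlinarith
end

section
/- Let t, k be integers with 2 ≤ t and 2t − 2 > k, let α = 2t − k − 2 (so α ≥ 1), and let A_{j,i} ⊆ [n] for j ∈ [k], i ∈ [m] satisfy: |A_{1,i_1} ∩ ... ∩ A_{k,i_k}| is even if and only if at least t of the indices are distinct. Then C(m − α, k − t + 1) ≤ n + 1. -/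
/-!
Write `k = a + s + s` and `t = a + s + 1`, where `a = 2t - k - 2` and `s = k - t + 1`. For
`s`-subsets `I`, `J` of the indices `≥ a`, the tuple listing `0, …, a - 1`, then `I`, then `J`
has exactly `a + |I ∪ J|` distinct entries, which is at least `t` iff `I ≠ J`. Splitting its
intersection after the first `a + s` coordinates gives sets `P I`, `Q J` with `|P I ∩ Q J|` odd
iff `I = J`. Over `𝔽₂` the incidence matrices of `P` and `Q` then multiply to the identity, so
the number `C(m - a, s)` of such subsets is at most the rank, hence at most `n`.
-/

open Finset

theorem card_le_card_of_odd_card_inter_iff {ι α : Type*} [Fintype ι] [DecidableEq ι]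
    [Fintype α] [DecidableEq α] (P Q : ι → Finset α)
    (hPQ : ∀ i j, Odd (P i ∩ Q j).card ↔ i = j) :
    Fintype.card ι ≤ Fintype.card α := by
  let V : Matrix ι α (ZMod 2) := .of fun i x => if x ∈ P i then 1 else 0
  let W : Matrix α ι (ZMod 2) := .of fun x j => if x ∈ Q j then 1 else 0
  have hVW : V * W = 1 := by
    ext i j
    have hentry : (V * W) i j = ((P i ∩ Q j).card : ZMod 2) := by
      simp [V, W, Matrix.mul_apply, ← ite_and, ← Finset.mem_inter, inter_comm]
    rw [hentry, Matrix.one_apply]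
    split_ifs with hij
    · exact ZMod.natCast_eq_one_iff_odd.2 ((hPQ i j).2 hij)
    · exact ZMod.natCast_eq_zero_iff_even.2 (Nat.not_odd_iff_even.1 (mt (hPQ i j).1 hij))
  calc Fintype.card ι = (V * W).rank := by rw [hVW, Matrix.rank_one]
    _ ≤ V.rank := Matrix.rank_mul_le_left V W
    _ ≤ Fintype.card α := Matrix.rank_le_card_width V

theorem Fin.image_univ_append {α : Type*} [DecidableEq α] {p q : ℕ} (u : Fin p → α)
    (v : Fin q → α) : univ.image (Fin.append u v) = univ.image u ∪ univ.image v := by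
  ext x
  simp only [mem_image, mem_univ, true_and, mem_union]
  constructor
  · rintro ⟨i, rfl⟩
    induction i using Fin.addCases <;> simp
  · rintro (⟨i, rfl⟩ | ⟨j, rfl⟩)
    exacts [⟨castAdd q i, by simp⟩, ⟨natAdd p j, by simp⟩]

theorem Fin.inf_univ_add {β : Type*} [SemilatticeInf β] [OrderTop β] {p q : ℕ}
    (f : Fin (p + q) → β) :
    univ.inf f = (univ.inf fun i => f (castAdd q i)) ⊓ univ.inf fun j => f (natAdd p j) := by
  refine le_antisymm (_root_.le_inf (Finset.le_inf fun i _ => inf_le (mem_univ _))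
    (Finset.le_inf fun j _ => inf_le (mem_univ _))) (Finset.le_inf fun i _ => ?_)
  induction i using Fin.addCases
  exacts [inf_le_left.trans (inf_le (mem_univ _)), inf_le_right.trans (inf_le (mem_univ _))]

theorem Finset.card_lt_card_union_iff_ne {α : Type*} [DecidableEq α] {s : ℕ} {I J : Finset α}
    (hI : I.card = s) (hJ : J.card = s) : s < (I ∪ J).card ↔ I ≠ J := by
  constructor
  · rintro hlt rfl
    simp [hI] at hlt
  · intro hne
    have hJI : ¬ J ⊆ I := fun h => hne (eq_of_subset_of_card_le h (by omega)).symm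
    rw [← hI]
    exact card_lt_card (ssubset_of_subset_of_ne subset_union_left
      fun h => hJI (h ▸ subset_union_right))

section BollobasTuple

variable {α : Type*} [Fintype α] [DecidableEq α] {a r s : ℕ}

def bollobasTuple (a : ℕ) (eI eJ : Fin s → Fin r) : Fin (a + s + s) → Fin (a + r) :=
  Fin.append (Fin.append (Fin.castAdd r) (Fin.natAdd a ∘ eI)) (Fin.natAdd a ∘ eJ)

theorem card_image_bollobasTuple (eI eJ : Fin s → Fin r) :
    #(univ.image (bollobasTuple a eI eJ)) = a + #(univ.image eI ∪ univ.image eJ) := by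
  have hshift : ∀ e : Fin s → Fin r,
      univ.image (Fin.natAdd a ∘ e) = (univ.image e).map (Fin.natAddEmb a) := fun e => by
    rw [map_eq_image, image_image]
    rfl
  have hdisj : Disjoint (univ.image (Fin.castAdd r))
      ((univ.image eI ∪ univ.image eJ).map (Fin.natAddEmb a)) := by
    simp only [disjoint_left, mem_image, mem_univ, true_and, mem_map, not_exists, not_and]
    rintro _ ⟨i, rfl⟩ j _ h
    have := congrArg Fin.val h
    simp only [Fin.natAddEmb_apply, Fin.val_castAdd, Fin.val_natAdd] at this
    omega
  rw [bollobasTuple, Fin.image_univ_append, Fin.image_univ_append, hshift, hshift, union_assoc,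
    ← map_union, card_union_of_disjoint hdisj, card_map,
    card_image_of_injective _ (Fin.castAdd_injective a r), card_univ, Fintype.card_fin]

theorem choose_le_card_of_even_card_inf_iff (A : Fin (a + s + s) → Fin (a + r) → Finset α)
    (hA : ∀ i : Fin (a + s + s) → Fin (a + r),
      Even #(univ.inf fun j => A j (i j)) ↔ a + s + 1 ≤ #(univ.image i)) :
    r.choose s ≤ Fintype.card α := by
  let e (I : {I : Finset (Fin r) // #I = s}) : Fin s → Fin r := I.1.orderEmbOfFin I.2
  have himage : ∀ I, univ.image (e I) = I.1 := fun I => image_orderEmbOfFin_univ I.1 I.2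
  let P (I : {I : Finset (Fin r) // #I = s}) : Finset α := univ.inf fun j : Fin (a + s) =>
    A (Fin.castAdd s j) (Fin.append (Fin.castAdd r) (Fin.natAdd a ∘ e I) j)
  let Q (J : {J : Finset (Fin r) // #J = s}) : Finset α := univ.inf fun j : Fin s =>
    A (Fin.natAdd (a + s) j) (Fin.natAdd a (e J j))
  have hsplit : ∀ I J, (univ.inf fun j => A j (bollobasTuple a (e I) (e J) j)) = P I ∩ Q J :=
    fun I J => by simp [Fin.inf_univ_add, bollobasTuple, P, Q]
  rw [← Fintype.card_fin r, ← Fintype.card_finset_len]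
  refine card_le_card_of_odd_card_inter_iff P Q fun I J => ?_
  rw [← hsplit, ← Nat.not_even_iff_odd, hA, card_image_bollobasTuple, himage, himage,
    Subtype.ext_iff, ← not_iff_not, not_not, ← Ne, ← card_lt_card_union_iff_ne I.2 J.2]
  omega

end BollobasTuple

theorem bollobas_kt_tuple_binomial_bound_large_t_general (n m k t : ℕ)
    (htk : t ≤ k) (hk : k < 2 * t - 2)
    (A : Fin k → Fin m → Finset (Fin n))
    (hA : ∀ i : Fin k → Fin m,
      Even ((Finset.inf (Finset.univ : Finset (Fin k)) fun j => A j (i j)).card) ↔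
        t ≤ ((Finset.univ : Finset (Fin k)).image i).card) :
    Nat.choose (m - (2 * t - k - 2)) (k - t + 1) ≤ n + 1 := by
  obtain ⟨a, s, rfl, rfl⟩ : ∃ a s, k = a + s + s ∧ t = a + s + 1 :=
    ⟨2 * t - k - 2, k - t + 1, by omega⟩
  rw [show 2 * (a + s + 1) - (a + s + s) - 2 = a by omega,
    show a + s + s - (a + s + 1) + 1 = s by omega]
  rcases lt_or_ge m a with hma | hma
  · rw [Nat.choose_eq_zero_of_lt (by omega)]
    omega
  obtain ⟨r, rfl⟩ := Nat.exists_eq_add_of_le hma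
  rw [Nat.add_sub_cancel_left]
  simpa using (choose_le_card_of_even_card_inf_iff A hA).trans (Nat.le_succ _)

/-- For a Bollobás set `(k,t)`-tuple modulo 2 with `2 ≤ t ≤ k` and `2t - 2 > k`,
setting `α = 2t - k - 2`, we have `C(m - α, k - t + 1) ≤ n + 1`. -/
theorem bollobas_kt_tuple_binomial_bound_large_t (n m k t : ℕ) (ht : 2 ≤ t)
    (htk : t ≤ k) (hk : k < 2 * t - 2)
    (A : Fin k → Fin m → Finset (Fin n))
    (hA : ∀ i : Fin k → Fin m,
      Even ((Finset.inf (Finset.univ : Finset (Fin k)) fun j => A j (i j)).card) ↔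
        t ≤ ((Finset.univ : Finset (Fin k)).image i).card) :
    Nat.choose (m - (2 * t - k - 2)) (k - t + 1) ≤ n + 1 :=
  bollobas_kt_tuple_binomial_bound_large_t_general n m k t htk hk A hA
end

section
/- Let m ≥ 2 and let A_{j,i} ⊆ [n] for j ∈ [5], i ∈ [m] be such that |A_{1,i_1} ∩ ... ∩ A_{5,i_5}| is even if and only if at least 4 of the indices i_1, ..., i_5 are distinct. Then the families B_j = {A_{1,1} ∩ A_{j+1,i} : 2 ≤ i ≤ m} for j ∈ [4] form a Bollobás set (4,3)-tuple modulo 2 of size m − 1, i.e. |B_{1,i_1} ∩ B_{2,i_2} ∩ B_{3,i_3} ∩ B_{4,i_4}| is even iff at least 3 of i_1, i_2, i_3, i_4 are distinct. Consequently b_{5,4}(n) ≤ b_{4,3}(n) + 1. -/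
/-!
Fix the first index of a `(5,4)`-tuple at `0` and intersect with `A_{1,0}`: an index tuple `i` of
the new families corresponds to the tuple `(0, i_1 + 1, …, i_4 + 1)` of the old ones, which has
exactly one more distinct entry. For the bound on `b`, the set of sizes of `(4,3)`-tuples must be
bounded; it is, because the second family of a `(4,3)`-tuple with at least three members is
injective.
-/

/-- `(A_1, …, A_k)` is a Bollobás set `(k,t)`-tuple modulo 2: the `k`-wise
intersection `A_{1,i_1} ∩ ⋯ ∩ A_{k,i_k}` has even size iff at least `t` of the
indices are distinct. -/
def IsBollobasTuple (n k t m : ℕ) (A : Fin k → Fin m → Finset (Fin n)) : Prop :=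
  ∀ i : Fin k → Fin m,
    Even ((Finset.inf (Finset.univ : Finset (Fin k)) fun j => A j (i j)).card) ↔
      t ≤ ((Finset.univ : Finset (Fin k)).image i).card

/-- `b_{k,t}(n)`: the maximum size of a Bollobás set `(k,t)`-tuple modulo 2 on `[n]`. -/
noncomputable def bkt (n k t : ℕ) : ℕ :=
  sSup {m | ∃ A : Fin k → Fin m → Finset (Fin n), IsBollobasTuple n k t m A}

theorem Fin.image_univ_cons {α : Type*} [DecidableEq α] {k : ℕ} (a : α) (f : Fin k → α) :
    Finset.univ.image (Fin.cons a f : Fin (k + 1) → α) = insert a (Finset.univ.image f) := by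
  simp [Fin.univ_image_def, List.ofFn_succ]

theorem Fin.inf_univ_succ {α : Type*} [Lattice α] [OrderTop α] {k : ℕ} (f : Fin (k + 1) → α) :
    Finset.univ.inf f = f 0 ⊓ Finset.univ.inf fun j : Fin k => f j.succ := by
  simp [Fin.univ_succ, Function.comp_def]

namespace IsBollobasTuple

variable {n k t m : ℕ}

theorem inter_head [NeZero k] (hm : 0 < m) {A : Fin (k + 1) → Fin m → Finset (Fin n)}
    (hA : IsBollobasTuple n (k + 1) (t + 1) m A) :
    IsBollobasTuple n k t (m - 1)
      (fun j i => A 0 ⟨0, hm⟩ ∩ A j.succ ⟨i.1 + 1, by have := i.2; omega⟩) := by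
  intro i
  let shift : Fin (m - 1) → Fin m := fun v => ⟨v.1 + 1, by have := v.2; omega⟩
  have shift_injective : shift.Injective := fun a b hab => by
    simpa [shift, Fin.ext_iff] using hab
  let i' : Fin (k + 1) → Fin m := Fin.cons ⟨0, hm⟩ (shift ∘ i)
  have hinf : (Finset.univ.inf fun j => A 0 ⟨0, hm⟩ ∩ A j.succ (shift (i j))) =
      Finset.univ.inf fun j => A j (i' j) := by
    ext x
    simp [Fin.inf_univ_succ, Finset.mem_inf, forall_and, i']
  have hcard : (Finset.univ.image i').card = (Finset.univ.image i).card + 1 := by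
    rw [Fin.image_univ_cons, Finset.card_insert_of_notMem, ← Finset.image_image,
      Finset.card_image_of_injective _ shift_injective]
    simp [shift, Fin.ext_iff]
  rw [hinf, hA i', hcard, Nat.add_le_add_iff_right]

/-- If `B 1 a = B 1 b` with `a ≠ b`, the index tuples `(a, a, c, c)` and `(a, b, c, c)` give the
same intersection but have two and three distinct entries respectively. -/
theorem injective_one {B : Fin 4 → Fin m → Finset (Fin n)} (hB : IsBollobasTuple n 4 3 m B)
    (hm : 3 ≤ m) : (B 1).Injective := by
  intro a b hab
  by_contra hne
  obtain ⟨c, hca, hcb⟩ := Fin.exists_ne_and_ne_of_two_lt a b hm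
  have hinf : (Finset.univ.inf fun j => B j (![a, a, c, c] j)) =
      Finset.univ.inf fun j => B j (![a, b, c, c] j) := by
    congr 1
    funext j
    fin_cases j <;> simp [hab]
  have two : ¬ 3 ≤ (Finset.univ.image ![a, a, c, c]).card := by
    simpa [Fin.univ_image_def, List.ofFn_succ] using Finset.card_le_two.trans_lt (by norm_num)
  have three : 3 ≤ (Finset.univ.image ![a, b, c, c]).card := by
    simp [Fin.univ_image_def, List.ofFn_succ, Finset.card_insert_of_notMem, hne, hca.symm,
      hcb.symm]
  exact two ((hB _).1 (hinf ▸ (hB _).2 three))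

end IsBollobasTuple

theorem bddAbove_setOf_isBollobasTuple_four_three (n : ℕ) :
    BddAbove {m | ∃ B : Fin 4 → Fin m → Finset (Fin n), IsBollobasTuple n 4 3 m B} := by
  refine ⟨max 2 (2 ^ n), fun m ⟨B, hB⟩ => ?_⟩
  by_cases hm : 3 ≤ m
  · simpa using le_max_of_le_right (Fintype.card_le_of_injective _ (hB.injective_one hm))
  · exact le_max_of_le_left (by omega)

theorem bkt_succ_succ_le {n k t : ℕ} [NeZero k]
    (hbdd : BddAbove {m | ∃ B : Fin k → Fin m → Finset (Fin n), IsBollobasTuple n k t m B}) :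
    bkt n (k + 1) (t + 1) ≤ bkt n k t + 1 := by
  refine csSup_le' fun m ⟨A, hA⟩ => ?_
  rcases Nat.eq_zero_or_pos m with rfl | hm
  · exact Nat.zero_le _
  · exact Nat.le_add_of_sub_le (le_csSup hbdd ⟨_, hA.inter_head hm⟩)

/-- From a Bollobás set `(5,4)`-tuple modulo 2 of size `m ≥ 2`, the families
`B_j = {A_{1,1} ∩ A_{j+1,i} : 2 ≤ i ≤ m}` form a Bollobás set `(4,3)`-tuple
modulo 2 of size `m - 1`; consequently `b_{5,4}(n) ≤ b_{4,3}(n) + 1`. -/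
theorem bollobas_54_to_43 (n m : ℕ) (hm : 2 ≤ m)
    (A : Fin 5 → Fin m → Finset (Fin n)) (hA : IsBollobasTuple n 5 4 m A) :
    IsBollobasTuple n 4 3 (m - 1)
      (fun j i => A 0 ⟨0, by omega⟩ ∩
        A j.succ ⟨i.1 + 1, by have := i.2; omega⟩) ∧
    bkt n 5 4 ≤ bkt n 4 3 + 1 :=
  ⟨hA.inter_head (by omega), bkt_succ_succ_le (bddAbove_setOf_isBollobasTuple_four_three n)⟩
end
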